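/- arXiv:2201.02346 — 3 statements merged into one kernel-verified Lean document; each statement's English description precedes it below -/
import Mathlib

section
/- Let S be a semigroup such that the intersection ideal graph Γ(S) contains a cycle. Then the girth of Γ(S) equals 3, i.e., Γ(S) contains a triangle. -/
/-- `I` is a left ideal of the semigroup `S`: a nonempty subset closed under
left multiplication by arbitrary elements of `S`. -/
def IsLeftIdeal (S : Type*) [Semigroup S] (I : Set S) : Prop :=
  I.Nonempty ∧ ∀ s : S, ∀ x ∈ I, s * x ∈ I

/-- `I` is a nontrivial left ideal of `S`: a left ideal with `I ≠ S`. -/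
def IsNontrivialLeftIdeal (S : Type*) [Semigroup S] (I : Set S) : Prop :=
  IsLeftIdeal S I ∧ I ≠ Set.univ

/-- `I` is a minimal left ideal of `S`: a nontrivial left ideal properly
containing no left ideal of `S`. -/
def IsMinimalLeftIdeal (S : Type*) [Semigroup S] (I : Set S) : Prop :=
  IsNontrivialLeftIdeal S I ∧ ∀ J : Set S, IsLeftIdeal S J → ¬ J ⊂ I

/-- `I` is a maximal left ideal of `S`: a nontrivial left ideal not properly
contained in any nontrivial left ideal of `S`. -/
def IsMaximalLeftIdeal (S : Type*) [Semigroup S] (I : Set S) : Prop :=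
  IsNontrivialLeftIdeal S I ∧ ∀ J : Set S, IsNontrivialLeftIdeal S J → ¬ I ⊂ J

/-- The intersection ideal graph `Γ(S)`: vertices are the nontrivial left ideals of `S`,
two distinct vertices being adjacent iff their intersection is nonempty. -/
def idealGraph (S : Type*) [Semigroup S] :
    SimpleGraph {I : Set S // IsNontrivialLeftIdeal S I} where
  Adj I J := I ≠ J ∧ (I.1 ∩ J.1).Nonempty
  symm := by
    constructor
    rintro I J ⟨h1, h2⟩
    exact ⟨h1.symm, by rwa [Set.inter_comm]⟩
  loopless := by constructor; rintro I ⟨h1, -⟩; exact h1 rfl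

/-!
Walking along a cycle gives adjacent ideals `I₀ - I₁ - I₂ - I₃` with `I₀ ≠ I₂` and `I₁ ≠ I₃`.
If `I₁ ∩ I₂` differs from both `I₁` and `I₂`, it is a nontrivial left ideal adjacent to both,
closing a triangle. Otherwise `I₁ ⊆ I₂`, and then `I₀` meets `I₂` (triangle `I₀ I₁ I₂`), or
`I₂ ⊆ I₁`, and then `I₃` meets `I₁` (triangle `I₁ I₂ I₃`).
-/

open SimpleGraph

theorem SimpleGraph.egirth_eq_three_of_adj {V : Type*} {G : SimpleGraph V} {a b c : V}
    (hab : G.Adj a b) (hbc : G.Adj b c) (hca : G.Adj c a) : G.egirth = 3 := by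
  refine le_antisymm ?_ G.three_le_egirth
  have hcycle : (Walk.cons hab (.cons hbc (.cons hca .nil))).IsCycle :=
    { edges_nodup := by simp [hab.ne, hbc.ne, hca.ne, hab.ne', hca.ne']
      ne_nil := by simp
      support_nodup := by simp [hbc.ne, hca.ne, hab.ne'] }
  simpa using egirth_le_length hcycle

/-- For a triangle the walk closes up, `d = a`. -/
theorem SimpleGraph.Walk.IsCycle.exists_adj_adj_adj {V : Type*} {G : SimpleGraph V} {v : V}
    {p : G.Walk v v} (hp : p.IsCycle) :
    ∃ a b c d, G.Adj a b ∧ G.Adj b c ∧ G.Adj c d ∧ a ≠ c ∧ b ≠ d := by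
  match p, hp with
  | .nil, hp => exact absurd rfl hp.ne_nil
  | .cons h .nil, _ => exact absurd h (G.loopless.irrefl v)
  | .cons _ (.cons _ .nil), hp => simpa using hp.three_le_length
  | .cons (v := b) hab (.cons (v := c) hbc (.cons (v := d) hcd q)), hp =>
    have hnodup := hp.support_nodup
    simp only [support_cons, List.tail_cons, List.nodup_cons, List.mem_cons] at hnodup
    exact ⟨v, b, c, d, hab, hbc, hcd,
      fun h ↦ hnodup.2.1 (h ▸ q.end_mem_support),
      fun h ↦ hnodup.1 (Or.inr (h ▸ q.start_mem_support))⟩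

theorem IsNontrivialLeftIdeal.inter {S : Type*} [Semigroup S] {I J : Set S}
    (hI : IsNontrivialLeftIdeal S I) (hJ : IsLeftIdeal S J)
    (hIJ : (I ∩ J).Nonempty) : IsNontrivialLeftIdeal S (I ∩ J) :=
  ⟨⟨hIJ, fun s x hx ↦ ⟨hI.1.2 s x hx.1, hJ.2 s x hx.2⟩⟩,
    fun h ↦ hI.2 (Set.eq_univ_of_univ_subset (h ▸ Set.inter_subset_left))⟩

namespace idealGraph

variable {S : Type*} [Semigroup S] {I J K : {I : Set S // IsNontrivialLeftIdeal S I}}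

theorem adj_of_adj_of_subset (hIJ : (idealGraph S).Adj I J) (hJK : J.1 ⊆ K.1) (hIK : I ≠ K) :
    (idealGraph S).Adj I K :=
  ⟨hIK, hIJ.2.mono (Set.inter_subset_inter_right _ hJK)⟩

/-- The common neighbour is `I ∩ J`. -/
theorem exists_adj_adj_or_subset_or_subset (hIJ : (idealGraph S).Adj I J) :
    (∃ K, (idealGraph S).Adj I K ∧ (idealGraph S).Adj J K) ∨ I.1 ⊆ J.1 ∨ J.1 ⊆ I.1 := by
  by_cases hI : I.1 ∩ J.1 = I.1
  · exact Or.inr (Or.inl (Set.inter_eq_left.mp hI))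
  by_cases hJ : I.1 ∩ J.1 = J.1
  · exact Or.inr (Or.inr (Set.inter_eq_right.mp hJ))
  refine Or.inl ⟨⟨I.1 ∩ J.1, I.2.inter J.2.1 hIJ.2⟩, ⟨?_, ?_⟩, ⟨?_, ?_⟩⟩
  · exact fun h ↦ hI (congrArg Subtype.val h).symm
  · exact hIJ.2.mono fun x hx ↦ ⟨hx.1, hx⟩
  · exact fun h ↦ hJ (congrArg Subtype.val h).symm
  · exact hIJ.2.mono fun x hx ↦ ⟨hx.2, hx⟩

theorem exists_triangle_of_adj_adj_adj {I₀ I₁ I₂ I₃ : {I : Set S // IsNontrivialLeftIdeal S I}}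
    (h₀₁ : (idealGraph S).Adj I₀ I₁) (h₁₂ : (idealGraph S).Adj I₁ I₂)
    (h₂₃ : (idealGraph S).Adj I₂ I₃) (h₀₂ : I₀ ≠ I₂) (h₁₃ : I₁ ≠ I₃) :
    ∃ a b c, (idealGraph S).Adj a b ∧ (idealGraph S).Adj b c ∧ (idealGraph S).Adj c a := by
  rcases exists_adj_adj_or_subset_or_subset h₁₂ with ⟨K, h₁K, h₂K⟩ | h | h
  · exact ⟨I₁, I₂, K, h₁₂, h₂K, h₁K.symm⟩
  · exact ⟨I₀, I₁, I₂, h₀₁, h₁₂, (adj_of_adj_of_subset h₀₁ h h₀₂).symm⟩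
  · exact ⟨I₁, I₂, I₃, h₁₂, h₂₃, adj_of_adj_of_subset h₂₃.symm h h₁₃.symm⟩

end idealGraph

/-- If `Γ(S)` contains a cycle then its girth equals `3`. -/
theorem idealGraph_girth_eq_three (S : Type*) [Semigroup S]
    (h : ∃ (v : {I : Set S // IsNontrivialLeftIdeal S I}) (c : (idealGraph S).Walk v v),
      c.IsCycle) :
    (idealGraph S).egirth = 3 := by
  obtain ⟨_, _, hc⟩ := h
  obtain ⟨I₀, I₁, I₂, I₃, h₀₁, h₁₂, h₂₃, h₀₂, h₁₃⟩ := hc.exists_adj_adj_adj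
  obtain ⟨a, b, c, hab, hbc, hca⟩ :=
    idealGraph.exists_triangle_of_adj_adj_adj h₀₁ h₁₂ h₂₃ h₀₂ h₁₃
  exact egirth_eq_three_of_adj hab hbc hca
end

section
/- Let S be a semigroup with exactly n minimal left ideals, where 3 ≤ n < ∞. Then the intersection ideal graph Γ(S) contains a clique of size n; explicitly, the n unions of (n−1) of the n minimal left ideals are pairwise adjacent nontrivial left ideals of S. -/
/-!
Two distinct minimal left ideals are disjoint, since a nonempty intersection would be a left
ideal inside both. Hence the union `Uᵢ` of all minimal left ideals other than `Iᵢ` misses the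
nonempty set `Iᵢ`: it is a proper left ideal, and `Uᵢ ≠ Uᵢ'` because `Iᵢ'` lies in `Uᵢ` but not
in `Uᵢ'`. As `n ≥ 3`, some third `Iₖ` lies in both `Uᵢ` and `Uᵢ'`.
-/

open Set Function

namespace Set

variable {α ι : Type*} {e : ι → Set α}

theorem disjoint_biUnion_ne (h : Pairwise (Disjoint on e)) (i : ι) :
    Disjoint (e i) (⋃ j ∈ {j | j ≠ i}, e j) :=
  disjoint_iUnion₂_right.2 fun _ hj => h (Ne.symm hj)

theorem biUnion_ne_injective (h : Pairwise (Disjoint on e)) (hne : ∀ i, (e i).Nonempty) :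
    Injective fun i => ⋃ j ∈ {j | j ≠ i}, e j := by
  intro i i' heq
  by_contra hii'
  have hsub : e i' ⊆ ⋃ j ∈ {j | j ≠ i}, e j := subset_biUnion_of_mem (Ne.symm hii')
  exact (hne i').ne_empty ((disjoint_biUnion_ne h i').eq_bot_of_le (hsub.trans heq.le))

end Set

section LeftIdeal

variable {S : Type*} [Semigroup S]

namespace IsLeftIdeal

theorem inter {I J : Set S} (hI : IsLeftIdeal S I) (hJ : IsLeftIdeal S J)
    (h : (I ∩ J).Nonempty) : IsLeftIdeal S (I ∩ J) :=
  ⟨h, fun s _ hx => ⟨hI.2 s _ hx.1, hJ.2 s _ hx.2⟩⟩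

theorem biUnion {ι : Type*} {e : ι → Set S} {s : Set ι} (he : ∀ j ∈ s, IsLeftIdeal S (e j))
    (hs : s.Nonempty) : IsLeftIdeal S (⋃ j ∈ s, e j) := by
  obtain ⟨k, hk⟩ := hs
  refine ⟨(he k hk).1.mono (subset_biUnion_of_mem hk), fun s x hx => ?_⟩
  obtain ⟨j, hj, hxj⟩ := mem_iUnion₂.mp hx
  exact mem_biUnion hj ((he j hj).2 s x hxj)

end IsLeftIdeal

namespace IsMinimalLeftIdeal

variable {I J : Set S}

theorem isLeftIdeal (hI : IsMinimalLeftIdeal S I) : IsLeftIdeal S I := hI.1.1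

theorem nonempty (hI : IsMinimalLeftIdeal S I) : I.Nonempty := hI.1.1.1

theorem eq_of_subset (hI : IsMinimalLeftIdeal S I) (hJ : IsLeftIdeal S J) (hJI : J ⊆ I) :
    J = I :=
  hJI.antisymm (not_not.mp fun h => hI.2 J hJ (ssubset_of_subset_not_subset hJI h))

theorem disjoint (hI : IsMinimalLeftIdeal S I) (hJ : IsMinimalLeftIdeal S J) (hIJ : I ≠ J) :
    Disjoint I J := by
  by_contra h
  have hIJ' := hI.isLeftIdeal.inter hJ.isLeftIdeal (not_disjoint_iff_nonempty_inter.mp h)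
  exact hIJ ((hI.eq_of_subset hIJ' inter_subset_left).symm.trans
    (hJ.eq_of_subset hIJ' inter_subset_right))

end IsMinimalLeftIdeal

variable {ι : Type*} {e : ι → Set S}

theorem pairwise_disjoint_of_isMinimalLeftIdeal (hmin : ∀ i, IsMinimalLeftIdeal S (e i))
    (he : Injective e) : Pairwise (Disjoint on e) :=
  fun i j hij => (hmin i).disjoint (hmin j) (he.ne hij)

theorem isNontrivialLeftIdeal_biUnion_ne (hmin : ∀ i, IsMinimalLeftIdeal S (e i))
    (hdisj : Pairwise (Disjoint on e)) {i k : ι} (hki : k ≠ i) :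
    IsNontrivialLeftIdeal S (⋃ j ∈ {j | j ≠ i}, e j) := by
  refine ⟨IsLeftIdeal.biUnion (fun j _ => (hmin j).isLeftIdeal) ⟨k, hki⟩, fun h => ?_⟩
  have hsub : e i ⊆ ⋃ j ∈ {j | j ≠ i}, e j := h ▸ subset_univ _
  exact (hmin i).nonempty.ne_empty ((disjoint_biUnion_ne hdisj i).eq_bot_of_le hsub)

end LeftIdeal

theorem idealGraph_clique_of_minimal_general (S : Type*) [Semigroup S] (n : ℕ) (hn : 3 ≤ n)
    (e : Fin n → Set S) (he : Function.Injective e)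
    (hmin : ∀ i, IsMinimalLeftIdeal S (e i)) :
    (∀ i : Fin n, IsNontrivialLeftIdeal S (⋃ j ∈ {j : Fin n | j ≠ i}, e j)) ∧
      ∀ i i' : Fin n, i ≠ i' →
        (⋃ j ∈ {j : Fin n | j ≠ i}, e j) ≠ (⋃ j ∈ {j : Fin n | j ≠ i'}, e j) ∧
        ((⋃ j ∈ {j : Fin n | j ≠ i}, e j) ∩ (⋃ j ∈ {j : Fin n | j ≠ i'}, e j)).Nonempty := by
  have hdisj := pairwise_disjoint_of_isMinimalLeftIdeal hmin he
  refine ⟨fun i => ?_, fun i i' hii' => ?_⟩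
  · obtain ⟨k, hki, -⟩ := Fin.exists_ne_and_ne_of_two_lt i i (by omega)
    exact isNontrivialLeftIdeal_biUnion_ne hmin hdisj hki
  · obtain ⟨k, hki, hki'⟩ := Fin.exists_ne_and_ne_of_two_lt i i' (by omega)
    obtain ⟨x, hx⟩ := (hmin k).nonempty
    exact ⟨fun h => hii' (biUnion_ne_injective hdisj (fun j => (hmin j).nonempty) h),
      x, mem_biUnion hki hx, mem_biUnion hki' hx⟩

/-- If `S` has exactly `n` minimal left ideals `I₁, …, Iₙ` with `3 ≤ n`, then `Γ(S)`
contains a clique of size `n`: the `n` unions of `n-1` of the minimal left ideals are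
pairwise adjacent nontrivial left ideals. -/
theorem idealGraph_clique_of_minimal (S : Type*) [Semigroup S] (n : ℕ) (hn : 3 ≤ n)
    (e : Fin n → Set S) (he : Function.Injective e)
    (hmin : ∀ i, IsMinimalLeftIdeal S (e i))
    (hall : ∀ I : Set S, IsMinimalLeftIdeal S I → ∃ i, I = e i) :
    (∀ i : Fin n, IsNontrivialLeftIdeal S (⋃ j ∈ {j : Fin n | j ≠ i}, e j)) ∧
      ∀ i i' : Fin n, i ≠ i' →
        (⋃ j ∈ {j : Fin n | j ≠ i}, e j) ≠ (⋃ j ∈ {j : Fin n | j ≠ i'}, e j) ∧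
        ((⋃ j ∈ {j : Fin n | j ≠ i}, e j) ∩ (⋃ j ∈ {j : Fin n | j ≠ i'}, e j)).Nonempty :=
  idealGraph_clique_of_minimal_general S n hn e he hmin
end

section
/- Let S be a semigroup and let K be a maximal left ideal of S whose degree in the intersection ideal graph Γ(S) is finite. Then the chromatic number of Γ(S) is finite. -/
theorem SimpleGraph.chromaticNumber_ne_top_of_finite {V : Type*} [Finite V] (G : SimpleGraph V) :
    G.chromaticNumber ≠ ⊤ := by
  have := Fintype.ofFinite V
  exact G.chromaticNumber_ne_top_iff_exists.mpr ⟨_, G.colorable_of_fintype⟩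

section LeftIdeal

variable {S : Type*} [Semigroup S] {I J K : Set S}

theorem IsLeftIdeal.union (hI : IsLeftIdeal S I) (hJ : IsLeftIdeal S J) :
    IsLeftIdeal S (I ∪ J) := by
  refine ⟨hI.1.mono Set.subset_union_left, ?_⟩
  rintro s x (hx | hx)
  · exact Or.inl (hI.2 s x hx)
  · exact Or.inr (hJ.2 s x hx)

theorem IsMaximalLeftIdeal.eq_compl_of_disjoint (hK : IsMaximalLeftIdeal S K)
    (hI : IsLeftIdeal S I) (hdisj : Disjoint K I) : I = Kᶜ := by
  have hssub : K ⊂ K ∪ I := by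
    obtain ⟨x, hx⟩ := hI.1
    exact Set.ssubset_iff_of_subset Set.subset_union_left |>.mpr
      ⟨x, Or.inr hx, hdisj.notMem_of_mem_right hx⟩
  have hunion : K ∪ I = Set.univ := by
    by_contra hne
    exact hK.2 _ ⟨hK.1.1.union hI, hne⟩ hssub
  exact (IsCompl.of_eq (disjoint_iff.mp hdisj) hunion).symm.eq_compl

theorem IsMaximalLeftIdeal.eq_or_adj_or_eq_compl (hK : IsMaximalLeftIdeal S K)
    (I : {I : Set S // IsNontrivialLeftIdeal S I}) :
    I = ⟨K, hK.1⟩ ∨ (idealGraph S).Adj ⟨K, hK.1⟩ I ∨ I.1 = Kᶜ := by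
  by_cases hIK : I = ⟨K, hK.1⟩
  · exact Or.inl hIK
  by_cases hdisj : Disjoint K I.1
  · exact Or.inr (Or.inr (hK.eq_compl_of_disjoint I.2.1 hdisj))
  · exact Or.inr (Or.inl ⟨Ne.symm hIK, Set.not_disjoint_iff_nonempty_inter.mp hdisj⟩)

theorem IsMaximalLeftIdeal.finite_nontrivialLeftIdeal (hK : IsMaximalLeftIdeal S K)
    (hdeg : ((idealGraph S).neighborSet ⟨K, hK.1⟩).Finite) :
    Finite {I : Set S // IsNontrivialLeftIdeal S I} := by
  have hcompl : {I : {I : Set S // IsNontrivialLeftIdeal S I} | I.1 = Kᶜ}.Finite :=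
    Set.Subsingleton.finite fun _ hI _ hJ => Subtype.ext (hI.trans hJ.symm)
  refine Set.finite_univ_iff.mp <| ((hdeg.union hcompl).insert ⟨K, hK.1⟩).subset fun I _ => ?_
  simpa only [Set.mem_insert_iff, Set.mem_union, SimpleGraph.mem_neighborSet,
    Set.mem_ofPred_eq] using hK.eq_or_adj_or_eq_compl I

end LeftIdeal

/-- If `K` is a maximal left ideal of `S` of finite degree in `Γ(S)`, then the chromatic
number of `Γ(S)` is finite. -/
theorem chromaticNumber_lt_top_of_maximal (S : Type*) [Semigroup S] (K : Set S)
    (hK : IsMaximalLeftIdeal S K)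
    (hdeg : ((idealGraph S).neighborSet ⟨K, hK.1⟩).Finite) :
    (idealGraph S).chromaticNumber ≠ ⊤ := by
  have := hK.finite_nontrivialLeftIdeal hdeg
  exact (idealGraph S).chromaticNumber_ne_top_of_finite
end
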